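/- The qubit generator 𝕃_th with rows (0,0,0,0), (0,ν,ω/2,0), (0,−ω/2,α,0), (χ,0,0,ζ) coincides with a generator of QDB form — rows (0,0,0,0), (0,⊙,ω/2,0), (0,−ω/2,⊙,0), (⊙_−,0,0,⊙_+) with ⊙ = η + μ(1+e^{β_f ω}), ⊙_± = 2μ(1 ± e^{β_f ω}), μ > 0, η ≥ 0 — if and only if ν = α, χ = 2μ(1 − e^{β_f ω}), ζ = 2μ(1 + e^{β_f ω}), and ν = η + μ(1 + e^{β_f ω}). In particular, whenever ν ≠ α the dynamics generated by 𝕃_th cannot satisfy the quantum detailed balance condition of this qubit classification, even though it is fixed-point thermalizing. -/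
import Mathlib


noncomputable section

/-- The generator `𝕃_th` of the fixed-point thermalizing qubit dynamics, acting on
Bloch vectors `(1, r_x, r_y, r_z)` via `∂_τ|ρ⟩ = -2𝕃_th|ρ⟩`. -/
def Lth (ν α ζ χ ω : ℝ) : Matrix (Fin 4) (Fin 4) ℝ :=
  !![0, 0, 0, 0;
     0, ν, ω / 2, 0;
     0, -(ω / 2), α, 0;
     χ, 0, 0, ζ]

/-- The most general qubit Lindblad generator satisfying the quantum detailed balance
condition with respect to the Gibbs state of `H ∝ σ_z` (Fagnola–Umanità
classification), in Bloch-vector form. -/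
def Lqdb (μ η βf ω : ℝ) : Matrix (Fin 4) (Fin 4) ℝ :=
  !![0, 0, 0, 0;
     0, η + μ * (1 + Real.exp (βf * ω)), ω / 2, 0;
     0, -(ω / 2), η + μ * (1 + Real.exp (βf * ω)), 0;
     2 * μ * (1 - Real.exp (βf * ω)), 0, 0, 2 * μ * (1 + Real.exp (βf * ω))]

/-- `𝕃_th` coincides with a generator of QDB form iff `ν = α`,
`χ = 2μ(1 - e^{β_f ω})`, `ζ = 2μ(1 + e^{β_f ω})` and `ν = η + μ(1 + e^{β_f ω})`;
in particular, whenever `ν ≠ α` the dynamics generated by `𝕃_th` cannot satisfy the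
quantum detailed balance condition of this qubit classification. -/
theorem stmt18 (ν α ζ χ ω βf μ η : ℝ) (hμ : 0 < μ) (hη : 0 ≤ η) :
    (Lth ν α ζ χ ω = Lqdb μ η βf ω
      ↔ (ν = α ∧ χ = 2 * μ * (1 - Real.exp (βf * ω))
          ∧ ζ = 2 * μ * (1 + Real.exp (βf * ω))
          ∧ ν = η + μ * (1 + Real.exp (βf * ω)))) ∧
    (ν ≠ α → ¬ ∃ μ' η' : ℝ, 0 < μ' ∧ 0 ≤ η' ∧ Lth ν α ζ χ ω = Lqdb μ' η' βf ω) := by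
  
  have key : ∀ μ η : ℝ, Lth ν α ζ χ ω = Lqdb μ η βf ω ↔
      (ν = η + μ * (1 + Real.exp (βf * ω)) ∧ α = η + μ * (1 + Real.exp (βf * ω))
        ∧ χ = 2 * μ * (1 - Real.exp (βf * ω)) ∧ ζ = 2 * μ * (1 + Real.exp (βf * ω))) := by
    intro μ η
    constructor
    · intro h
      refine ⟨?_, ?_, ?_, ?_⟩
      · have := congrFun (congrFun h 1) 1; simpa [Lth, Lqdb] using this
      · have := congrFun (congrFun h 2) 2; simpa [Lth, Lqdb] using this
      · have := congrFun (congrFun h 3) 0; simpa [Lth, Lqdb] using this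
      · have := congrFun (congrFun h 3) 3; simpa [Lth, Lqdb] using this
    · rintro ⟨h1, h2, h3, h4⟩
      unfold Lth Lqdb
      rw [h1, h2, h3, h4]
  constructor
  · rw [key μ η]
    constructor
    · rintro ⟨h1, h2, h3, h4⟩; exact ⟨h1.trans h2.symm, h3, h4, h1⟩
    · rintro ⟨h1, h2, h3, h4⟩; exact ⟨h4, h1 ▸ h4, h2, h3⟩
  · rintro hne ⟨μ', η', _, _, h⟩
    rw [key μ' η'] at h
    exact hne (h.1.trans h.2.1.symm)
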